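/- arXiv:math/0412498 — 3 statements merged into one kernel-verified Lean document; each statement's English description precedes it below -/
import Mathlib

section
/- For a semifilter 𝓕 on ω, viewed as a subset of the Cantor space 2^ω via characteristic functions, 𝓕⊥ is comeager if and only if 𝓕 is meager. -/
/-- A semifilter on `ω`: a nonempty family of infinite subsets of `ω`
closed under almost-supersets. -/
def IsSemifilter (F : Set (Set ℕ)) : Prop :=
  F.Nonempty ∧ (∀ A ∈ F, A.Infinite) ∧
    ∀ A ∈ F, ∀ B : Set ℕ, (A \ B).Finite → B ∈ F

/-- The dual of a family: all infinite sets meeting every member of the family. -/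
def dualSF (F : Set (Set ℕ)) : Set (Set ℕ) :=
  {G | G.Infinite ∧ ∀ A ∈ F, (G ∩ A).Nonempty}

/-- Characteristic-function embedding of `𝒫(ω)` into Cantor space `2^ω`. -/
noncomputable def chi (s : Set ℕ) : ℕ → Bool :=
  fun n => @decide (n ∈ s) (Classical.propDecidable _)

namespace SemifilterAux

open Set

abbrev X : Type := ℕ → Bool

lemma chi_eq_true {s : Set ℕ} {n : ℕ} : chi s n = true ↔ n ∈ s := by
  unfold chi
  exact @decide_eq_true_iff _ (Classical.propDecidable _)

lemma chi_setOf (x : X) : chi {n | x n = true} = x := by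
  funext i
  cases hb : x i with
  | false =>
    apply Bool.eq_false_iff.mpr
    intro h
    have : x i = true := chi_eq_true.mp h
    rw [hb] at this; exact Bool.false_ne_true this
  | true => exact chi_eq_true.mpr hb

lemma open_prefix {V : Set X} (hV : IsOpen V) {y : X} (hy : y ∈ V) :
    ∃ m, ∀ z : X, (∀ i < m, z i = y i) → z ∈ V := by
  obtain ⟨I, u, hu, hsub⟩ := isOpen_pi_iff.1 hV y hy
  refine ⟨(I.sup id) + 1, fun z hz => hsub fun i hi => ?_⟩
  have hz' : z i = y i := hz i (Nat.lt_succ_of_le (Finset.le_sup (f := id) hi))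
  rw [hz']
  exact (hu i hi).2

lemma dense_prefix {D : Set X} (h : ∀ x : X, ∀ m, ∃ y ∈ D, ∀ i < m, y i = x i) :
    Dense D := by
  rw [dense_iff_inter_open]
  rintro U hU ⟨x, hx⟩
  obtain ⟨m, hm⟩ := open_prefix hU hx
  obtain ⟨y, hyD, hy⟩ := h x m
  exact ⟨y, hm y hy, hyD⟩

lemma dense_open_ext {V : Set X} (hO : IsOpen V) (hD : Dense V) (x : X) (m : ℕ) :
    ∃ N, m < N ∧ ∃ y : X, (∀ i < m, y i = x i) ∧
      ∀ z : X, (∀ i < N, z i = y i) → z ∈ V := by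
  have hC : IsOpen {z : X | ∀ i < m, z i = x i} := by
    have he : {z : X | ∀ i < m, z i = x i}
        = ⋂ i ∈ Finset.range m, {z : X | z i = x i} := by
      ext z; simp [Finset.mem_range]
    rw [he]
    refine isOpen_biInter_finset fun i _ => ?_
    show IsOpen ((fun z : X => z i) ⁻¹' {x i})
    exact (isOpen_discrete {x i}).preimage (continuous_apply i)
  obtain ⟨y, hyC, hyV⟩ := hD.inter_open_nonempty _ hC ⟨x, fun i _ => rfl⟩
  obtain ⟨m0, hm0⟩ := open_prefix hO hyV
  refine ⟨max (m + 1) m0, lt_of_lt_of_le (Nat.lt_succ_self m) (le_max_left _ _),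
    y, hyC, fun z hz => hm0 z fun i hi => hz i (lt_of_lt_of_le hi (le_max_right _ _))⟩

lemma step {V : Set X} (hO : IsOpen V) (hD : Dense V) (m : ℕ) :
    ∃ N, m < N ∧ ∃ T : X → X, ∀ x : X,
      (∀ i < m, T x i = x i) ∧ ∀ z : X, (∀ i < N, z i = T x i) → z ∈ V := by
  classical
  have h : ∀ s : Fin m → Bool, ∃ N, m < N ∧ ∃ y : X,
      (∀ i < m, y i = (fun j => if h : j < m then s ⟨j, h⟩ else false) i) ∧
      ∀ z : X, (∀ i < N, z i = y i) → z ∈ V :=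
    fun s => dense_open_ext hO hD _ m
  choose Ns hNs ys hys hguar using h
  refine ⟨max (m + 1) (Finset.univ.sup Ns),
    lt_of_lt_of_le (Nat.lt_succ_self m) (le_max_left _ _),
    fun x => ys (fun j => x j.1), fun x => ⟨?_, ?_⟩⟩
  · intro i hi
    show ys (fun j => x j.1) i = x i
    rw [hys (fun j => x j.1) i hi]
    simp [hi]
  · intro z hz
    apply hguar (fun j => x j.1)
    intro i hi
    exact hz i (lt_of_lt_of_le hi
      (le_trans (Finset.le_sup (Finset.mem_univ _)) (le_max_right _ _)))

lemma isMeagre_preimage_homeo (h : X ≃ₜ X) {s : Set X} (hs : IsMeagre s) :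
    IsMeagre (h ⁻¹' s) := by
  rw [IsMeagre] at hs ⊢
  obtain ⟨S, ho, hd, hc, hsub⟩ := mem_residual_iff.1 hs
  apply mem_residual_iff.2
  refine ⟨(fun t => h ⁻¹' t) '' S, ?_, ?_, hc.image _, ?_⟩
  · rintro t ⟨u, hu, rfl⟩; exact (ho u hu).preimage h.continuous
  · rintro t ⟨u, hu, rfl⟩; exact (hd u hu).preimage h.isOpenMap
  · intro x hx
    have : h x ∈ ⋂₀ S := fun u hu => hx _ ⟨u, hu, rfl⟩
    exact hsub this

noncomputable def negH : X ≃ₜ X where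
  toFun := fun x i => !(x i)
  invFun := fun x i => !(x i)
  left_inv := fun x => funext fun i => Bool.not_not _
  right_inv := fun x => funext fun i => Bool.not_not _
  continuous_toFun := by
    apply continuous_pi
    intro i
    exact Continuous.comp (continuous_of_discreteTopology (f := Bool.not)) (continuous_apply i)
  continuous_invFun := by
    apply continuous_pi
    intro i
    exact Continuous.comp (continuous_of_discreteTopology (f := Bool.not)) (continuous_apply i)

lemma comeager_to_meager (F : Set (Set ℕ)) (h : IsMeagre (chi '' dualSF F)ᶜ) :
    IsMeagre (chi '' F) := by
  have hsub : chi '' F ⊆ negH ⁻¹' ((chi '' dualSF F)ᶜ) := by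
    rintro _ ⟨A, hA, rfl⟩
    rintro ⟨G, hG, hGe⟩
    have hGe' : chi G = fun i => !(chi A i) := hGe
    have hGA : ∀ i, i ∈ G → i ∉ A := by
      intro i hiG hiA
      have h1 : chi G i = true := chi_eq_true.mpr hiG
      have h2 : chi A i = true := chi_eq_true.mpr hiA
      rw [hGe'] at h1
      simp [h2] at h1
    obtain ⟨i, hiG, hiA⟩ := hG.2 A hA
    exact hGA i hiG hiA
  exact (isMeagre_preimage_homeo negH h).mono hsub

lemma meager_to_comeager (F : Set (Set ℕ)) (hF : IsSemifilter F)
    (h : IsMeagre (chi '' F)) : IsMeagre (chi '' dualSF F)ᶜ := by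
  classical
  obtain ⟨S, hSo, hSd, hSc, hSsub⟩ := mem_residual_iff.1 h
  -- enumerate dense open sets
  obtain ⟨U, hU⟩ := (hSc.insert univ).exists_eq_range (insert_nonempty _ _)
  have hUo : ∀ k, IsOpen (U k) := by
    intro k
    have : U k ∈ insert univ S := hU ▸ mem_range_self k
    rcases this with h' | h'
    · rw [h']; exact isOpen_univ
    · exact hSo _ h'
  have hUd : ∀ k, Dense (U k) := by
    intro k
    have : U k ∈ insert univ S := hU ▸ mem_range_self k
    rcases this with h' | h'
    · rw [h']; exact dense_univ
    · exact hSd _ h'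
  have hUsub : (⋂ k, U k) ⊆ (chi '' F)ᶜ := by
    intro x hx
    apply hSsub
    intro t ht
    have : t ∈ insert univ S := mem_insert_of_mem _ ht
    rw [hU] at this
    obtain ⟨k, rfl⟩ := this
    exact mem_iInter.1 hx k
  -- decreasing intersections
  set V : ℕ → Set X := fun k =>
    Nat.rec (motive := fun _ => Set X) (U 0) (fun k ih => ih ∩ U (k + 1)) k with hV
  have hVsucc : ∀ k, V (k + 1) = V k ∩ U (k + 1) := fun k => rfl
  have hVo : ∀ k, IsOpen (V k) := by
    intro k
    induction k with
    | zero => exact hUo 0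
    | succ k ih => rw [hVsucc]; exact ih.inter (hUo _)
  have hVd : ∀ k, Dense (V k) := by
    intro k
    induction k with
    | zero => exact hUd 0
    | succ k ih => rw [hVsucc]; exact ih.inter_of_isOpen_left (hUd _) (hVo k)
  have hVU : ∀ k, V k ⊆ U k := by
    intro k
    cases k with
    | zero => exact fun x hx => hx
    | succ k => rw [hVsucc]; exact inter_subset_right
  have hVanti : ∀ {j k : ℕ}, j ≤ k → V k ⊆ V j := by
    intro j k hjk
    induction hjk with
    | refl => exact fun x hx => hx
    | step h' ih => exact fun x hx => ih ((hVsucc _) ▸ hx).1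
  have hFV : ∀ x ∈ chi '' F, ∃ k, x ∉ V k := by
    intro x hx
    by_contra hc
    push_neg at hc
    exact hUsub (mem_iInter.2 fun k => hVU k (hc k)) hx
  -- the interval construction
  have hstep : ∀ k m, ∃ N, m < N ∧ ∃ T : X → X, ∀ x : X,
      (∀ i < m, T x i = x i) ∧ ∀ z : X, (∀ i < N, z i = T x i) → z ∈ V k :=
    fun k m => step (hVo k) (hVd k) m
  choose NN hstep' using hstep
  have hNN : ∀ k m, m < NN k m := fun k m => (hstep' k m).1
  choose TT hTT using fun k m => (hstep' k m).2
  set n : ℕ → ℕ := fun k =>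
    Nat.rec (motive := fun _ => ℕ) 0 (fun k ih => NN k ih) k with hn
  have hnsucc : ∀ k, n (k + 1) = NN k (n k) := fun k => rfl
  have hnlt : ∀ k, n k < n (k + 1) := fun k => hNN k (n k)
  have hnmono : StrictMono n := strictMono_nat_of_lt_succ hnlt
  have hnge : ∀ k, k ≤ n k := fun k => hnmono.le_apply
  -- key combinatorial lemma
  have key : ∀ A ∈ F, ∃ m, ∀ k, m ≤ k →
      ∃ i, i ∈ A ∧ n k ≤ i ∧ i < n (k + 1) := by
    intro A hA
    by_contra hcon
    push_neg at hcon
    -- hcon : ∀ m, ∃ k, m ≤ k ∧ ∀ i, i ∈ A → ¬(n k ≤ i ∧ i < n (k+1))  (shape may vary)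
    choose κ hκ hgap using hcon
    set ks : ℕ → ℕ := fun j =>
      Nat.rec (motive := fun _ => ℕ) (κ 0) (fun _ ih => κ (ih + 1)) j with hks
    have hks_succ : ∀ j, ks (j + 1) = κ (ks j + 1) := fun j => rfl
    have hks_gap : ∀ j i, i ∈ A → n (ks j) ≤ i → ¬ i < n (ks j + 1) := by
      intro j
      cases j with
      | zero => intro i h1 h2 h3; exact absurd h3 (Nat.not_lt.mpr (hgap 0 i h1 h2))
      | succ j => intro i h1 h2 h3; exact absurd h3 (Nat.not_lt.mpr (hgap (ks j + 1) i h1 h2))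
    have hks_lt : ∀ j, ks j < ks (j + 1) := fun j =>
      lt_of_lt_of_le (Nat.lt_succ_self _) (hκ (ks j + 1))
    have hks_mono : StrictMono ks := strictMono_nat_of_lt_succ hks_lt
    have hks_ge : ∀ j, j ≤ ks j := fun j => hks_mono.le_apply
    set B : ℕ → X := fun j =>
      Nat.rec (motive := fun _ => X) (chi A)
        (fun j ih => fun i =>
          if n (ks j) ≤ i ∧ i < n (ks j + 1) then TT (ks j) (n (ks j)) ih i else ih i) j
      with hB
    have hB_succ : ∀ j i, B (j + 1) i =
        if n (ks j) ≤ i ∧ i < n (ks j + 1) then TT (ks j) (n (ks j)) (B j) i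
        else B j i := fun j i => rfl
    have hB_ge : ∀ j i, chi A i = true → B j i = true := by
      intro j
      induction j with
      | zero => intro i h'; exact h'
      | succ j ih =>
        intro i h'
        rw [hB_succ]
        split_ifs with hcond
        · exact absurd hcond.2 (hks_gap j i (chi_eq_true.mp h') hcond.1)
        · exact ih i h'
    have hB_stable : ∀ j j', j ≤ j' → ∀ i, i < n (ks j) → B j' i = B j i := by
      intro j j' hjj'
      induction j' , hjj' using Nat.le_induction with
      | base => intro i _; rfl
      | succ j' hjj' ih =>
        intro i hi
        rw [hB_succ]
        rw [if_neg]
        · exact ih i hi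
        · rintro ⟨h1, _⟩
          have : i < n (ks j') :=
            lt_of_lt_of_le hi (hnmono.monotone (hks_mono.monotone hjj'))
          omega
    set Binf : X := fun i => B (i + 1) i with hBinfdef
    have hBinf : ∀ j i, i < n (ks j) → Binf i = B j i := by
      intro j i hi
      rcases le_total (i + 1) j with h' | h'
      · have hi2 : i < n (ks (i + 1)) :=
          lt_of_lt_of_le (Nat.lt_succ_self i) (le_trans (hks_ge (i + 1)) (hnge _))
        exact (hB_stable (i + 1) j h' i hi2).symm
      · exact hB_stable j (i + 1) h' i hi
    have hBinf_mem : ∀ k, Binf ∈ V k := by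
      intro k
      apply hVanti (hks_ge k)
      apply (hTT (ks k) (n (ks k)) (B k)).2
      intro i hi
      have hi' : i < n (ks k + 1) := by rw [hnsucc]; exact hi
      have h1 : i < n (ks (k + 1)) :=
        lt_of_lt_of_le hi' (hnmono.monotone (Nat.succ_le_of_lt (hks_lt k)))
      rw [hBinf (k + 1) i h1, hB_succ]
      by_cases hc : n (ks k) ≤ i ∧ i < n (ks k + 1)
      · rw [if_pos hc]
      · rw [if_neg hc]
        have hlt : i < n (ks k) := by
          rcases Nat.lt_or_ge i (n (ks k)) with h' | h'
          · exact h'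
          · exact absurd ⟨h', hi'⟩ hc
        exact ((hTT (ks k) (n (ks k)) (B k)).1 i hlt).symm
    -- Binf comes from a member of F
    have hmem : {i | Binf i = true} ∈ F := by
      apply hF.2.2 A hA
      apply Set.Finite.subset (Set.finite_empty)
      rintro i ⟨hiA, hiB⟩
      exact hiB (hB_ge (i + 1) i (chi_eq_true.mpr hiA))
    obtain ⟨k, hk⟩ := hFV Binf ⟨_, hmem, chi_setOf Binf⟩
    exact hk (hBinf_mem k)
  -- the comeager witness
  set W : ℕ → Set X := fun m =>
    ⋃ k, ⋃ (_ : m ≤ k), {x : X | ∀ i, n k ≤ i → i < n (k + 1) → x i = true} with hW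
  have hWo : ∀ m, IsOpen (W m) := by
    intro m
    apply isOpen_iUnion; intro k; apply isOpen_iUnion; intro _
    have he : {x : X | ∀ i, n k ≤ i → i < n (k + 1) → x i = true}
        = ⋂ i ∈ Finset.Ico (n k) (n (k + 1)), {x : X | x i = true} := by
      ext x; simp [Finset.mem_Ico]
    rw [he]
    refine isOpen_biInter_finset fun i _ => ?_
    show IsOpen ((fun z : X => z i) ⁻¹' {true})
    exact (isOpen_discrete {true}).preimage (continuous_apply i)
  have hWd : ∀ m, Dense (W m) := by
    intro m
    apply dense_prefix
    intro x m0
    refine ⟨fun i => if n (max m m0) ≤ i ∧ i < n (max m m0 + 1) then true else x i,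
      ?_, ?_⟩
    · apply mem_iUnion.2
      refine ⟨max m m0, mem_iUnion.2 ⟨le_max_left m m0, ?_⟩⟩
      intro i h1 h2
      exact if_pos ⟨h1, h2⟩
    · intro i hi
      apply if_neg
      rintro ⟨h1, _⟩
      have : i < n (max m m0) :=
        lt_of_lt_of_le hi (le_trans (le_max_right m m0) (hnge _))
      omega
  have hWsub : (⋂ m, W m) ⊆ chi '' dualSF F := by
    intro x hx
    refine ⟨{i | x i = true}, ⟨?_, ?_⟩, chi_setOf x⟩
    · apply Set.infinite_of_not_bddAbove
      rintro ⟨b, hb⟩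
      obtain ⟨k, hk⟩ := mem_iUnion.1 (mem_iInter.1 hx (b + 1))
      obtain ⟨hbk, hk2⟩ := mem_iUnion.1 hk
      have h1 : x (n k) = true := hk2 (n k) le_rfl (hnlt k)
      have h2 : n k ≤ b := hb h1
      have h3 : b + 1 ≤ n k := le_trans hbk (hnge k)
      omega
    · intro A hA
      obtain ⟨m, hm⟩ := key A hA
      obtain ⟨k, hk⟩ := mem_iUnion.1 (mem_iInter.1 hx m)
      obtain ⟨hmk, hk2⟩ := mem_iUnion.1 hk
      obtain ⟨i, hiA, h1, h2⟩ := hm k hmk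
      exact ⟨i, hk2 i h1 h2, hiA⟩
  rw [IsMeagre, compl_compl]
  exact Filter.mem_of_superset
    ((countable_iInter_mem).2 fun m => residual_of_dense_open (hWo m) (hWd m)) hWsub

end SemifilterAux

/-- `𝓕⊥` is comeager in Cantor space iff `𝓕` is meager. -/
theorem stmt4 (F : Set (Set ℕ)) (hF : IsSemifilter F) :
    IsMeagre (chi '' dualSF F)ᶜ ↔ IsMeagre (chi '' F) := by
  exact ⟨SemifilterAux.comeager_to_meager F, SemifilterAux.meager_to_comeager F hF⟩
end

section
/- (Talagrand) A semifilter 𝓕 on ω is nonmeager in the Cantor space 𝒫(ω) if and only if for every sequence (I_n) of pairwise disjoint nonempty finite subsets of ω there exists an infinite set H ⊆ ω such that ω \ ⋃_{n ∈ H} I_n belongs to 𝓕. -/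
open Set

lemma chi_true {s : Set ℕ} {n : ℕ} : chi s n = true ↔ n ∈ s := by
  simp [chi]

lemma chi_false {s : Set ℕ} {n : ℕ} : chi s n = false ↔ n ∉ s := by
  simp [chi]

lemma interior_union_empty {X : Type*} [TopologicalSpace X] {s t : Set X}
    (hs : IsClosed s) (hsi : interior s = ∅) (hti : interior t = ∅) :
    interior (s ∪ t) = ∅ := by
  have h1 : interior (s ∪ t) \ s ⊆ interior t := by
    apply interior_maximal
    · rintro x ⟨hx, hxs⟩
      rcases interior_subset hx with h | h
      · exact absurd h hxs
      · exact h
    · exact isOpen_interior.sdiff hs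
  have h2 : interior (s ∪ t) ⊆ s := by
    intro x hx
    by_contra hxs
    have := h1 ⟨hx, hxs⟩
    rw [hti] at this
    exact this
  have h3 := interior_maximal h2 isOpen_interior
  rw [hsi] at h3
  exact eq_empty_of_subset_empty h3

lemma extend_avoid {C : Set (ℕ → Bool)} (hC : IsClosed C) (hN : interior C = ∅)
    (x : ℕ → Bool) (a : ℕ) :
    ∃ b, a ≤ b ∧ ∃ y : ℕ → Bool, (∀ i, i < a → y i = x i) ∧
      ∀ z : ℕ → Bool, (∀ i, i < b → z i = y i) → z ∉ C := by
  have hUopen : IsOpen {z : ℕ → Bool | ∀ i, i < a → z i = x i} := by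
    have hEq : {z : ℕ → Bool | ∀ i, i < a → z i = x i}
        = Set.pi {i | i < a} (fun i => {x i}) := by
      ext z; simp [Set.mem_pi]
    rw [hEq]
    exact isOpen_set_pi (Set.finite_Iio a) (fun i _ => isOpen_discrete _)
  have hne : ({z : ℕ → Bool | ∀ i, i < a → z i = x i} \ C).Nonempty := by
    rw [Set.nonempty_iff_ne_empty]
    intro h
    have hsub : {z : ℕ → Bool | ∀ i, i < a → z i = x i} ⊆ C := by
      rwa [Set.diff_eq_empty] at h
    have := interior_maximal hsub hUopen
    rw [hN] at this
    exact this (fun i _ => rfl)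
  obtain ⟨y, hyU, hyC⟩ := hne
  obtain ⟨J, u, hu, hsub⟩ := isOpen_pi_iff.mp (hUopen.sdiff hC) y ⟨hyU, hyC⟩
  refine ⟨max a ((J.sup id) + 1), le_max_left _ _, y, hyU, ?_⟩
  intro z hz
  have hzJ : z ∈ (↑J : Set ℕ).pi u := by
    intro j hj
    have hjb : j < max a ((J.sup id) + 1) :=
      lt_of_lt_of_le (Nat.lt_succ_of_le (Finset.le_sup (f := id) hj)) (le_max_right _ _)
    rw [hz j hjb]
    exact (hu j hj).2
  exact (hsub hzJ).2

lemma list_avoid {C : Set (ℕ → Bool)} (hC : IsClosed C) (hN : interior C = ∅) :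
    ∀ (L : List (ℕ → Bool)) (a : ℕ), ∃ b, a ≤ b ∧ ∃ σ : ℕ → Bool,
      ∀ s ∈ L, ∀ x : ℕ → Bool, (∀ i, i < a → x i = s i) →
        (∀ i, a ≤ i → i < b → x i = σ i) → x ∉ C := by
  intro L
  induction L with
  | nil => exact fun a => ⟨a, le_rfl, fun _ => false, by simp⟩
  | cons s L ih =>
    intro a
    obtain ⟨b₁, hb₁, σ₁, hσ₁⟩ := ih a
    obtain ⟨b₂, hb₂, y, hy₁, hy₂⟩ :=
      extend_avoid hC hN (fun i => if i < a then s i else σ₁ i) b₁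
    refine ⟨b₂, le_trans hb₁ hb₂, fun i => if i < b₁ then σ₁ i else y i, ?_⟩
    rintro t ht x hx hmatch
    rcases List.mem_cons.mp ht with rfl | htL
    · apply hy₂
      intro i hib₂
      rcases lt_or_ge i b₁ with hib₁ | hib₁
      · rw [hy₁ i hib₁]
        rcases lt_or_ge i a with hia | hia
        · rw [hx i hia, if_pos hia]
        · rw [hmatch i hia hib₂]
          simp only [if_pos hib₁, if_neg (not_lt.mpr hia)]
      · rw [hmatch i (le_trans hb₁ hib₁) hib₂]
        simp only [if_neg (not_lt.mpr hib₁)]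
    · refine hσ₁ t htL x hx ?_
      intro i hia hib₁
      rw [hmatch i hia (lt_of_lt_of_le hib₁ hb₂)]
      simp only [if_pos hib₁]

lemma cyl_avoid {C : Set (ℕ → Bool)} (hC : IsClosed C) (hN : interior C = ∅) (a : ℕ) :
    ∃ b, a < b ∧ ∃ σ : ℕ → Bool, (∃ i, a ≤ i ∧ i < b ∧ σ i = false) ∧
      ∀ x : ℕ → Bool, (∀ i, a ≤ i → i < b → x i = σ i) → x ∉ C := by
  obtain ⟨b₁, hb₁, σ₁, hσ₁⟩ := list_avoid hC hN
    (((Finset.univ : Finset (Fin a → Bool)).toList).map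
      (fun f i => if h : i < a then f ⟨i, h⟩ else false)) a
  refine ⟨b₁ + 1, lt_of_le_of_lt hb₁ (Nat.lt_succ_self _),
    fun i => if i = b₁ then false else σ₁ i,
    ⟨b₁, hb₁, Nat.lt_succ_self _, by simp⟩, ?_⟩
  intro x hx
  have hmem : (fun i => if h : i < a then x i else false) ∈
      (((Finset.univ : Finset (Fin a → Bool)).toList).map
        (fun f i => if h : i < a then f ⟨i, h⟩ else false)) := by
    apply List.mem_map.mpr
    exact ⟨fun j : Fin a => x j, Finset.mem_toList.mpr (Finset.mem_univ _), rfl⟩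
  apply hσ₁ _ hmem x
  · intro i hi
    rw [dif_pos hi]
  · intro i hia hib
    rw [hx i hia (lt_trans hib (Nat.lt_succ_self _))]
    simp only [if_neg (Nat.ne_of_lt hib)]

/-- Auxiliary recursion producing the endpoints of intervals. -/
def recSeq (b : ℕ → ℕ → ℕ) : ℕ → ℕ
  | 0 => 0
  | n + 1 => b n (recSeq b n)

/-- Increasing unions of closures. -/
def unionSeq (C : ℕ → Set (ℕ → Bool)) : ℕ → Set (ℕ → Bool)
  | 0 => closure (C 0)
  | n + 1 => unionSeq C n ∪ closure (C (n + 1))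

/-- Talagrand's characterization of nonmeager semifilters. -/
theorem stmt5 (F : Set (Set ℕ)) (hF : IsSemifilter F) :
    ¬ IsMeagre (chi '' F) ↔
      ∀ I : ℕ → Finset ℕ, (∀ n, (I n).Nonempty) →
        (∀ m n, m ≠ n → Disjoint (I m) (I n)) →
        ∃ H : Set ℕ, H.Infinite ∧ (⋃ n ∈ H, (I n : Set ℕ))ᶜ ∈ F := by
  constructor
  · -- nonmeager → combinatorial condition
    intro hnm I hIne hIdisj
    by_contra hno
    push_neg at hno
    apply hnm
    rw [isMeagre_iff_countable_union_isNowhereDense]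
    refine ⟨Set.range (fun k => {x : ℕ → Bool | ∀ n, k ≤ n → ∃ i ∈ I n, x i = true}),
      ?_, Set.countable_range _, ?_⟩
    · rintro _ ⟨k, rfl⟩
      have hclosed : IsClosed {x : ℕ → Bool | ∀ n, k ≤ n → ∃ i ∈ I n, x i = true} := by
        have hEq : {x : ℕ → Bool | ∀ n, k ≤ n → ∃ i ∈ I n, x i = true}
            = ⋂ n ∈ {n : ℕ | k ≤ n}, ⋃ i ∈ (I n : Set ℕ), {x : ℕ → Bool | x i = true} := by
          ext x; simp
        rw [hEq]
        refine isClosed_biInter fun n _ => (I n).finite_toSet.isClosed_biUnion fun i _ => ?_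
        exact isClosed_eq (continuous_apply i) continuous_const
      rw [IsNowhereDense, hclosed.closure_eq]
      rw [eq_empty_iff_forall_notMem]
      intro x hx
      obtain ⟨J, u, hu, hsub⟩ := isOpen_pi_iff.mp isOpen_interior x hx
      have hbadfin : ({n : ℕ | ∃ j ∈ J, j ∈ I n} ∪ Set.Iio k).Finite := by
        refine Set.Finite.union ?_ (Set.finite_Iio k)
        have hsub' : {n : ℕ | ∃ j ∈ J, j ∈ I n} ⊆ ⋃ j ∈ (J : Set ℕ), {n : ℕ | j ∈ I n} := by
          intro n hn; simpa using hn
        refine Set.Finite.subset (Set.Finite.biUnion J.finite_toSet fun j _ => ?_) hsub'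
        apply Set.Subsingleton.finite
        intro n₁ h₁ n₂ h₂
        by_contra hne
        exact Finset.disjoint_left.mp (hIdisj n₁ n₂ hne) h₁ h₂
      obtain ⟨n, hn⟩ := hbadfin.infinite_compl.nonempty
      simp only [Set.mem_compl_iff, Set.mem_union, Set.mem_Iio, not_or, not_lt] at hn
      obtain ⟨hnbad, hkn⟩ := hn
      have hy : (fun i => if i ∈ I n then false else x i) ∈
          interior {x : ℕ → Bool | ∀ n, k ≤ n → ∃ i ∈ I n, x i = true} := by
        apply hsub
        intro j hj
        have hjI : j ∉ I n := fun hjn => hnbad ⟨j, hj, hjn⟩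
        simp only [if_neg hjI]
        exact (hu j hj).2
      obtain ⟨i, hiI, hi⟩ := interior_subset hy n hkn
      simp only [if_pos hiI] at hi
      exact Bool.noConfusion hi
    · rw [Set.sUnion_range]
      rintro _ ⟨A, hA, rfl⟩
      have hHA : {n : ℕ | ∀ i ∈ I n, i ∉ A}.Finite := by
        by_contra hinf
        apply hno _ hinf
        have hsub : A ⊆ (⋃ n ∈ {n : ℕ | ∀ i ∈ I n, i ∉ A}, (I n : Set ℕ))ᶜ := by
          intro a ha
          simp only [Set.mem_compl_iff, Set.mem_iUnion]
          rintro ⟨n, hn, hi⟩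
          exact hn a hi ha
        refine hF.2.2 A hA _ ?_
        rw [Set.diff_eq_empty.mpr hsub]
        exact Set.finite_empty
      obtain ⟨k, hk⟩ := hHA.bddAbove
      refine Set.mem_iUnion.mpr ⟨k + 1, ?_⟩
      intro n hkn
      have hnmem : n ∉ {n : ℕ | ∀ i ∈ I n, i ∉ A} := by
        intro hmem
        exact absurd (hk hmem) (not_le.mpr hkn)
      simp only [Set.mem_setOf_eq] at hnmem
      push_neg at hnmem
      obtain ⟨i, hiI, hiA⟩ := hnmem
      exact ⟨i, hiI, chi_true.mpr hiA⟩
  · -- combinatorial condition → nonmeager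
    intro hcond hM
    rw [isMeagre_iff_countable_union_isNowhereDense] at hM
    obtain ⟨S, hSnd, hScnt, hScov⟩ := hM
    have hSne : S.Nonempty := by
      obtain ⟨A, hA⟩ := hF.1
      obtain ⟨t, ht, _⟩ := hScov ⟨A, hA, rfl⟩
      exact ⟨t, ht⟩
    obtain ⟨Cs, rfl⟩ := hScnt.exists_eq_range hSne
    have hDcl : ∀ n, IsClosed (unionSeq Cs n) := by
      intro n; induction n with
      | zero => exact isClosed_closure
      | succ m ih => exact ih.union isClosed_closure
    have hDint : ∀ n, interior (unionSeq Cs n) = ∅ := by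
      intro n; induction n with
      | zero => exact hSnd _ ⟨0, rfl⟩
      | succ m ih => exact interior_union_empty (hDcl m) ih (hSnd _ ⟨m + 1, rfl⟩)
    have hDsub : ∀ k n, k ≤ n → Cs k ⊆ unionSeq Cs n := by
      intro k n
      induction n with
      | zero =>
        intro hk
        rw [Nat.le_zero.mp hk]
        exact subset_closure
      | succ m ih =>
        intro hk
        rcases Nat.lt_or_ge k (m + 1) with h | h
        · exact (ih (Nat.lt_succ_iff.mp h)).trans Set.subset_union_left
        · rw [Nat.le_antisymm hk h]
          exact subset_closure.trans Set.subset_union_right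
    have hstep : ∀ n a, ∃ b : ℕ, a < b ∧ ∃ σ : ℕ → Bool,
        (∃ i, a ≤ i ∧ i < b ∧ σ i = false) ∧
        ∀ x, (∀ i, a ≤ i → i < b → x i = σ i) → x ∉ unionSeq Cs n :=
      fun n a => cyl_avoid (hDcl n) (hDint n) a
    choose b hb σ hσ1 hσ2 using hstep
    set aa : ℕ → ℕ := recSeq b with haa
    have haux : ∀ n, aa (n + 1) = b n (aa n) := fun n => rfl
    have hmono : StrictMono aa := strictMono_nat_of_lt_succ (fun n => hb n (aa n))
    set Iset : ℕ → Finset ℕ :=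
      fun n => (Finset.Ico (aa n) (aa (n + 1))).filter (fun i => σ n (aa n) i = false)
      with hIset
    have hIsetmem : ∀ n i, i ∈ Iset n ↔ (aa n ≤ i ∧ i < aa (n + 1)) ∧ σ n (aa n) i = false := by
      intro n i
      simp [hIset, Finset.mem_filter, Finset.mem_Ico]
    have hIne : ∀ n, (Iset n).Nonempty := by
      intro n
      obtain ⟨i, h1, h2, h3⟩ := hσ1 n (aa n)
      exact ⟨i, (hIsetmem n i).mpr ⟨⟨h1, h2⟩, h3⟩⟩
    have hIco : ∀ m n, m < n → ∀ i, i ∈ Iset m → i ∉ Iset n := by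
      intro m n hmn i him hin
      obtain ⟨⟨_, h2⟩, _⟩ := (hIsetmem m i).mp him
      obtain ⟨⟨h3, _⟩, _⟩ := (hIsetmem n i).mp hin
      exact absurd (lt_of_lt_of_le h2 ((hmono.le_iff_le).mpr hmn)) (not_lt.mpr h3)
    have hIdisj : ∀ m n, m ≠ n → Disjoint (Iset m) (Iset n) := by
      intro m n hmn
      rw [Finset.disjoint_left]
      intro i him hin
      rcases hmn.lt_or_gt with h | h
      · exact hIco m n h i him hin
      · exact hIco n m h i hin him
    obtain ⟨H, hHinf, hHF⟩ := hcond Iset hIne hIdisj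
    obtain ⟨t, ⟨k, rfl⟩, hkmem⟩ := hScov ⟨_, hHF, rfl⟩
    obtain ⟨n, hnH, hkn⟩ := hHinf.exists_gt k
    refine hσ2 n (aa n) (chi (⋃ m ∈ H, (Iset m : Set ℕ))ᶜ) ?_ (hDsub k n hkn.le hkmem)
    intro i h1 h2
    cases hσv : σ n (aa n) i with
    | false =>
      rw [chi_false, Set.notMem_compl_iff]
      exact Set.mem_biUnion hnH (Finset.mem_coe.mpr ((hIsetmem n i).mpr ⟨⟨h1, h2⟩, hσv⟩))
    | true =>
      rw [chi_true]
      intro hmem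
      simp only [Set.mem_iUnion] at hmem
      obtain ⟨m, hmH, him⟩ := hmem
      obtain ⟨⟨hm1, hm2⟩, hmf⟩ := (hIsetmem m i).mp (Finset.mem_coe.mp him)
      rcases eq_or_ne m n with rfl | hmn
      · rw [hσv] at hmf
        exact Bool.noConfusion hmf
      · rcases hmn.lt_or_gt with h | h
        · exact absurd (lt_of_lt_of_le hm2 (hmono.le_iff_le.mpr h)) (not_lt.mpr h1)
        · exact absurd (lt_of_lt_of_le h2 (hmono.le_iff_le.mpr h)) (not_lt.mpr hm1)
end

section
/- Every comeager semifilter 𝓕 on ω (viewed as a subspace of the space [ω]^ω of infinite subsets of ω) fails to have the Menger property: it contains a closed copy of the Baire space ℕ^ω. -/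
/-- The Menger property. -/
def Menger (X : Type*) [TopologicalSpace X] : Prop :=
  ∀ u : ℕ → Set (Set X), (∀ n, ∀ V ∈ u n, IsOpen V) → (∀ n, ⋃₀ u n = Set.univ) →
    ∃ v : ℕ → Set (Set X), (∀ n, v n ⊆ u n ∧ (v n).Finite) ∧
      ⋃ n, ⋃₀ v n = Set.univ

/-- The space `[ω]^ω` of infinite subsets of `ω`, as a subspace of Cantor space. -/
abbrev InfSets : Type := {f : ℕ → Bool // {n : ℕ | f n = true}.Infinite}

lemma cyl_isOpen (s : ℕ → Bool) (K : ℕ) :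
    IsOpen {z : InfSets | ∀ i < K, z.1 i = s i} := by
  have : {z : InfSets | ∀ i < K, z.1 i = s i} =
      Subtype.val ⁻¹' (⋂ i ∈ Finset.range K, (fun g : ℕ → Bool => g i) ⁻¹' {s i}) := by
    ext z
    simp [Set.mem_iInter, Finset.mem_range]
  rw [this]
  exact (isOpen_biInter_finset fun i _ =>
    (isOpen_discrete _).preimage (continuous_apply i)).preimage continuous_subtype_val

lemma step1 (D : Set InfSets) (hD : IsOpen D) (hdense : Dense D) (K : ℕ) (s : ℕ → Bool) :
    ∃ K' : ℕ, ∃ t : ℕ → Bool, K < K' ∧ (∀ i < K, t i = s i) ∧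
      (∃ i, K ≤ i ∧ i < K' ∧ t i = true) ∧
      ∀ z : InfSets, (∀ i < K', z.1 i = t i) → z ∈ D := by
  set C : Set InfSets := {z : InfSets | ∀ i < K, z.1 i = s i} with hC
  have hCopen : IsOpen C := cyl_isOpen s K
  have hCne : C.Nonempty := by
    refine ⟨⟨fun i => if i < K then s i else true, ?_⟩, fun i hi => by simp [hi]⟩
    apply Set.Infinite.mono (s := Set.Ici K)
    · intro n hn
      simp only [Set.mem_Ici] at hn
      simp only [Set.mem_setOf_eq, if_neg (Nat.not_lt.mpr hn)]
    · exact Set.Ici_infinite K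
  obtain ⟨z₀, hz₀C, hz₀D⟩ := hdense.inter_open_nonempty C hCopen hCne
  -- D is a neighborhood of z₀; find a finite support
  have hmem : D ∈ nhds z₀ := hD.mem_nhds hz₀D
  replace hmem := (mem_nhds_subtype {f : ℕ → Bool | {n : ℕ | f n = true}.Infinite} z₀ D).mp hmem
  obtain ⟨U, hU, hUD⟩ := hmem
  obtain ⟨U', hU'U, hU'open, hz₀U'⟩ := mem_nhds_iff.mp hU
  obtain ⟨I, u, hu, hpi⟩ := isOpen_pi_iff.mp hU'open z₀.1 hz₀U'
  obtain ⟨P, hPmem, hPK⟩ := z₀.2.exists_gt K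
  set N : ℕ := I.sup id + 1 with hN
  refine ⟨max N (P + 1), z₀.1, ?_, fun i hi => hz₀C i hi, ⟨P, le_of_lt hPK, ?_, hPmem⟩, ?_⟩
  · omega
  · omega
  · intro z hz
    apply hUD
    apply hU'U
    apply hpi
    intro i hi
    have hiN : i < N := by
      have : i ≤ I.sup id := Finset.le_sup (f := id) hi
      omega
    have hz' := hz i (lt_of_lt_of_le hiN (le_max_left _ _))
    rw [hz']
    exact (hu i hi).2

lemma step (D : Set InfSets) (hD : IsOpen D) (hdense : Dense D) (K : ℕ) :
    ∃ K' : ℕ, K < K' ∧ ∀ s : ℕ → Bool, ∃ t : ℕ → Bool, (∀ i < K, t i = s i) ∧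
      (∃ i, K ≤ i ∧ i < K' ∧ t i = true) ∧
      ∀ z : InfSets, (∀ i < K', z.1 i = t i) → z ∈ D := by
  have h := fun σ : Fin K → Bool =>
    step1 D hD hdense K (fun i => if h : i < K then σ ⟨i, h⟩ else false)
  choose Kf tf hlt hagree hwit hin using h
  refine ⟨max (K + 1) (Finset.univ.sup Kf), by omega, fun s => ?_⟩
  set σ : Fin K → Bool := fun i => s i with hσ
  have hKf : Kf σ ≤ max (K + 1) (Finset.univ.sup Kf) :=
    le_trans (Finset.le_sup (Finset.mem_univ σ)) (le_max_right _ _)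
  refine ⟨tf σ, fun i hi => ?_, ?_, fun z hz => ?_⟩
  · rw [hagree σ i hi]
    simp [hi]
    rfl
  · obtain ⟨i, h1, h2, h3⟩ := hwit σ
    exact ⟨i, h1, lt_of_lt_of_le h2 hKf, h3⟩
  · exact hin σ z fun i hi => hz i (lt_of_lt_of_le hi hKf)

lemma nat_set_infinite {s : Set ℕ} (h : ∀ N, ∃ i, N ≤ i ∧ i ∈ s) : s.Infinite := by
  intro hfin
  obtain ⟨B, hB⟩ := hfin.bddAbove
  obtain ⟨i, hi, his⟩ := h (B + 1)
  exact absurd (hB his) (by omega)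

theorem exists_intervals (F : Set (Set ℕ)) (hF : IsSemifilter F)
    (S : Set InfSets) (hS : S = {f : InfSets | {n : ℕ | f.1 n = true} ∈ F})
    (hcomeager : IsMeagre Sᶜ) :
    ∃ k : ℕ → ℕ, k 0 = 0 ∧ StrictMono k ∧
      ∀ X : Set ℕ, {n | Set.Ico (k n) (k (n + 1)) ⊆ X}.Infinite → X ∈ F := by
  classical
  have hres : S ∈ residual InfSets := by
    have := hcomeager
    rw [IsMeagre] at this
    rwa [compl_compl] at this
  obtain ⟨T, hTopen, hTdense, hTct, hTsub⟩ := mem_residual_iff.mp hres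
  -- enumerate T ∪ {univ}
  have hct : (insert Set.univ T).Countable := hTct.insert _
  obtain ⟨f, hf⟩ := (Set.countable_iff_exists_surjective ⟨_, Set.mem_insert _ _⟩).mp hct
  have hfopen : ∀ n, IsOpen (f n : Set InfSets) := by
    intro n
    rcases (f n).2 with h | h
    · rw [h]; exact isOpen_univ
    · exact hTopen _ h
  have hfdense : ∀ n, Dense (f n : Set InfSets) := by
    intro n
    rcases (f n).2 with h | h
    · rw [h]; exact dense_univ
    · exact hTdense _ h
  -- decreasing intersections
  set D : ℕ → Set InfSets := fun n => Nat.rec (f 0 : Set InfSets)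
    (fun m ih => ih ∩ (f (m + 1) : Set InfSets)) n with hD
  have hDopen : ∀ n, IsOpen (D n) := by
    intro n
    induction n with
    | zero => exact hfopen 0
    | succ m ih => exact ih.inter (hfopen (m + 1))
  have hDdense : ∀ n, Dense (D n) := by
    intro n
    induction n with
    | zero => exact hfdense 0
    | succ m ih => exact (Dense.inter_of_isOpen_left ih (hfdense (m + 1)) (hDopen m))
  have hDsub : ∀ n, D n ⊆ (f n : Set InfSets) := by
    intro n
    cases n with
    | zero => exact le_rfl
    | succ m => exact Set.inter_subset_right
  have hDanti : ∀ m n, m ≤ n → D n ⊆ D m := by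
    intro m n hmn
    induction n with
    | zero => rw [Nat.le_zero.mp hmn]
    | succ p ih =>
      rcases Nat.lt_or_ge m (p + 1) with h | h
      · exact le_trans Set.inter_subset_left (ih (by omega))
      · rw [le_antisymm hmn h]
  have hDS : (⋂ n, D n) ⊆ S := by
    refine le_trans ?_ hTsub
    intro x hx
    rw [Set.mem_sInter]
    intro t ht
    obtain ⟨n, hn⟩ := hf ⟨t, Set.mem_insert_of_mem _ ht⟩
    have heq : (f n : Set InfSets) = t := congrArg Subtype.val hn
    rw [← heq]
    exact hDsub n (Set.mem_iInter.mp hx n)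
  -- build the intervals
  choose K' hlt hstep using fun (n K : ℕ) => step (D n) (hDopen n) (hDdense n) K
  choose t ht1 ht2 ht3 using hstep
  set k : ℕ → ℕ := fun n => Nat.rec 0 (fun m ih => K' m ih) n with hk
  have hk0 : k 0 = 0 := rfl
  have hksucc : ∀ n, k (n + 1) = K' n (k n) := fun n => rfl
  have hkmono : StrictMono k := strictMono_nat_of_lt_succ fun n => hlt n (k n)
  have hkge : ∀ n, n ≤ k n := fun n => hkmono.le_apply
  refine ⟨k, hk0, hkmono, ?_⟩
  intro X hA
  set A : Set ℕ := {n | Set.Ico (k n) (k (n + 1)) ⊆ X} with hAdef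
  -- construct the generic element y
  set p : ℕ → ℕ → Bool := fun n => Nat.rec (fun _ => false)
    (fun m ih i => if m ∈ A then (if i < k (m + 1) then t m (k m) ih i else false) else ih i) n
    with hp
  have hp0 : ∀ i, p 0 i = false := fun _ => rfl
  have hpsucc : ∀ m i, p (m + 1) i =
      if m ∈ A then (if i < k (m + 1) then t m (k m) (p m) i else false) else p m i :=
    fun m i => rfl
  have inv1 : ∀ n i, k n ≤ i → p n i = false := by
    intro n
    induction n with
    | zero => intro i _; exact hp0 i
    | succ m ih =>
      intro i hi
      rw [hpsucc]
      by_cases hm : m ∈ A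
      · rw [if_pos hm, if_neg (by omega)]
      · rw [if_neg hm]
        exact ih i (le_trans (le_of_lt (hkmono (Nat.lt_succ_self m))) hi)
  have inv2 : ∀ m i, i < k m → p (m + 1) i = p m i := by
    intro m i hi
    rw [hpsucc]
    by_cases hm : m ∈ A
    · rw [if_pos hm, if_pos (lt_trans hi (hkmono (Nat.lt_succ_self m)))]
      exact ht1 m (k m) (p m) i hi
    · rw [if_neg hm]
  have inv3 : ∀ m n, m ≤ n → ∀ i, i < k m → p n i = p m i := by
    intro m n hmn
    induction n with
    | zero => rw [Nat.le_zero.mp hmn]; intro i hi; rfl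
    | succ q ih =>
      intro i hi
      rcases Nat.lt_or_ge m (q + 1) with h | h
      · rw [inv2 q i (lt_of_lt_of_le hi (hkmono.le_iff_le.mpr (by omega)))]
        exact ih (by omega) i hi
      · rw [le_antisymm hmn h]
  set y : ℕ → Bool := fun i => p (i + 1) i with hy
  have hyeq : ∀ n i, i < k n → y i = p n i := by
    intro n i hi
    have hik : i < k (i + 1) := lt_of_lt_of_le (Nat.lt_succ_self i) (hkge (i + 1))
    rcases Nat.le_total (i + 1) n with h | h
    · exact (inv3 (i + 1) n h i hik).symm
    · exact inv3 n (i + 1) h i hi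
  -- block decomposition: each i lies in some interval
  have hblock : ∀ i : ℕ, ∃ n, k n ≤ i ∧ i < k (n + 1) := by
    intro i
    have h1 : ∃ n, i < k n := ⟨i + 1, lt_of_lt_of_le (Nat.lt_succ_self i) (hkge (i + 1))⟩
    have hn₀pos : Nat.find h1 ≠ 0 := by
      intro h0
      have := Nat.find_spec h1
      rw [h0, hk0] at this
      omega
    obtain ⟨m, hm⟩ := Nat.exists_eq_succ_of_ne_zero hn₀pos
    have hspec : i < k (m + 1) := by have := Nat.find_spec h1; rwa [hm] at this
    have hmin : ¬ i < k m := Nat.find_min h1 (by omega)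
    exact ⟨m, by omega, hspec⟩
  -- trues of y are inside X
  have hyX : ∀ i, y i = true → i ∈ X := by
    intro i hi
    obtain ⟨n, hn1, hn2⟩ := hblock i
    rw [hyeq (n + 1) i hn2] at hi
    rw [hpsucc] at hi
    by_cases hm : n ∈ A
    · exact hm (Set.mem_Ico.mpr ⟨hn1, hn2⟩)
    · rw [if_neg hm] at hi
      rw [inv1 n i hn1] at hi
      exact absurd hi (by simp)
  -- y has a true in every A-block
  have hywit : ∀ n ∈ A, ∃ i, k n ≤ i ∧ i < k (n + 1) ∧ y i = true := by
    intro n hn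
    obtain ⟨i, h1, h2, h3⟩ := ht2 n (k n) (p n)
    rw [← hksucc] at h2
    refine ⟨i, h1, h2, ?_⟩
    rw [hyeq (n + 1) i h2, hpsucc, if_pos hn, if_pos h2]
    exact h3
  have hyinf : {i | y i = true}.Infinite := by
    apply nat_set_infinite
    intro N
    obtain ⟨n, hnA, hnN⟩ := hA.exists_gt N
    obtain ⟨i, h1, h2, h3⟩ := hywit n hnA
    exact ⟨i, by have := hkge n; omega, h3⟩
  set z : InfSets := ⟨y, hyinf⟩ with hz
  -- z is in every D n for n ∈ A, hence in all D m
  have hzD : ∀ n ∈ A, z ∈ D n := by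
    intro n hn
    apply ht3 n (k n) (p n)
    intro i hi
    rw [← hksucc] at hi
    show y i = _
    rw [hyeq (n + 1) i hi, hpsucc, if_pos hn, if_pos hi]
  have hzS : z ∈ S := by
    apply hDS
    rw [Set.mem_iInter]
    intro m
    obtain ⟨n, hnA, hnm⟩ := hA.exists_gt m
    exact hDanti m n (le_of_lt hnm) (hzD n hnA)
  -- conclude via the semifilter property
  rw [hS] at hzS
  refine hF.2.2 _ hzS X ?_
  have : {n | z.1 n = true} \ X = ∅ := by
    rw [Set.diff_eq_empty]
    exact fun i hi => hyX i hi
  rw [this]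
  exact Set.finite_empty



theorem baire_not_menger : ¬ Menger (ℕ → ℕ) := by
  intro h
  obtain ⟨v, hv, hcov⟩ := h (fun n => Set.range (fun K => {f : ℕ → ℕ | f n ≤ K}))
    (by
      rintro n V ⟨K, rfl⟩
      show IsOpen ((fun f : ℕ → ℕ => f n) ⁻¹' Set.Iic K)
      exact (isOpen_discrete _).preimage (continuous_apply n))
    (by
      intro n
      ext f
      simp only [Set.mem_sUnion, Set.mem_univ, iff_true]
      exact ⟨{g | g n ≤ f n}, ⟨f n, rfl⟩, by simp⟩)
  have hbd : ∀ n, ∃ K : ℕ, ∀ V ∈ v n, ∀ f : ℕ → ℕ, f ∈ V → f n ≤ K := by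
    intro n
    have hfin : (v n).Finite := (hv n).2
    have h2 : ∀ V ∈ v n, ∃ K : ℕ, V = {f : ℕ → ℕ | f n ≤ K} := by
      intro V hV
      obtain ⟨K, rfl⟩ := (hv n).1 hV
      exact ⟨K, rfl⟩
    choose! g hg using h2
    obtain ⟨K, hK⟩ := (hfin.image g).bddAbove
    refine ⟨K, fun V hV f hf => ?_⟩
    rw [hg V hV] at hf
    exact le_trans hf (hK (Set.mem_image_of_mem g hV))
  choose K hK using hbd
  have hm : (fun n => K n + 1) ∈ ⋃ n, ⋃₀ v n := hcov ▸ Set.mem_univ _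
  obtain ⟨_, ⟨n, rfl⟩, V, hV, hf⟩ := hm
  exact absurd (hK n V hV _ hf) (by simp)

theorem menger_of_isClosedEmbedding {X Y : Type*} [TopologicalSpace X] [TopologicalSpace Y]
    {e : X → Y} (he : Topology.IsClosedEmbedding e) (hY : Menger Y) : Menger X := by
  intro u hopen hcov
  by_cases hXe : Nonempty X
  swap
  · refine ⟨fun _ => ∅, fun n => ⟨Set.empty_subset _, Set.finite_empty⟩, ?_⟩
    rw [Set.eq_univ_iff_forall]
    intro x
    exact absurd ⟨x⟩ hXe
  have hch : ∀ n, ∀ V : Set X, ∃ W : Set Y, V ∈ u n → IsOpen W ∧ V = e ⁻¹' W := by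
    intro n V
    by_cases hV : V ∈ u n
    · obtain ⟨W, hW, hWV⟩ := he.isInducing.isOpen_iff.mp (hopen n V hV)
      exact ⟨W, fun _ => ⟨hW, hWV.symm⟩⟩
    · exact ⟨∅, fun h => absurd h hV⟩
  choose c hc using hch
  obtain ⟨v', hv', hcov'⟩ := hY (fun n => (fun V => c n V ∪ (Set.range e)ᶜ) '' u n)
    (by
      rintro n W ⟨V, hV, rfl⟩
      exact ((hc n V hV).1.union he.isClosed_range.isOpen_compl))
    (by
      intro n
      apply Set.eq_univ_of_forall
      intro y
      by_cases hy : y ∈ Set.range e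
      · obtain ⟨x, rfl⟩ := hy
        have hx : x ∈ ⋃₀ u n := (hcov n) ▸ Set.mem_univ x
        obtain ⟨V, hV, hxV⟩ := hx
        refine ⟨c n V ∪ (Set.range e)ᶜ, ⟨V, hV, rfl⟩, Or.inl ?_⟩
        have := (hc n V hV).2
        rw [this] at hxV
        exact hxV
      · obtain ⟨x⟩ := hXe
        have hx : x ∈ ⋃₀ u n := (hcov n) ▸ Set.mem_univ x
        obtain ⟨V, hV, _⟩ := hx
        exact ⟨c n V ∪ (Set.range e)ᶜ, ⟨V, hV, rfl⟩, Or.inr hy⟩)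
  -- pull back: for each W in v' n, choose V ∈ u n mapping to it
  have hsec : ∀ n, ∀ W : Set Y, ∃ V : Set X,
      W ∈ v' n → V ∈ u n ∧ c n V ∪ (Set.range e)ᶜ = W := by
    intro n W
    by_cases hW : W ∈ v' n
    · obtain ⟨V, hV, hVW⟩ := (hv' n).1 hW
      exact ⟨V, fun _ => ⟨hV, hVW⟩⟩
    · exact ⟨∅, fun h => absurd h hW⟩
  choose d hd using hsec
  refine ⟨fun n => d n '' (v' n), fun n => ⟨?_, (hv' n).2.image _⟩, ?_⟩
  · rintro V ⟨W, hW, rfl⟩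
    exact (hd n W hW).1
  · apply Set.eq_univ_of_forall
    intro x
    have : e x ∈ ⋃ n, ⋃₀ v' n := hcov' ▸ Set.mem_univ _
    obtain ⟨_, ⟨n, rfl⟩, W, hW, hxW⟩ := this
    refine Set.mem_iUnion.mpr ⟨n, ⟨d n W, ⟨W, hW, rfl⟩, ?_⟩⟩
    obtain ⟨hVu, hVW⟩ := hd n W hW
    rw [← hVW] at hxW
    rcases hxW with h | h
    · rw [(hc n _ hVu).2]
      exact h
    · exact absurd ⟨x, rfl⟩ h







/-- The sequence of interval indices coded by `f`. -/
def mseq (f : ℕ → ℕ) : ℕ → ℕ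
  | 0 => f 0
  | i + 1 => mseq f i + f (i + 1) + 1

lemma mseq_strictMono (f : ℕ → ℕ) : StrictMono (mseq f) :=
  strictMono_nat_of_lt_succ fun i => by simp [mseq]

lemma mseq_congr {f g : ℕ → ℕ} (i : ℕ) (h : ∀ j ≤ i, f j = g j) : mseq f i = mseq g i := by
  induction i with
  | zero => exact h 0 le_rfl
  | succ m ih =>
    simp only [mseq]
    rw [ih (fun j hj => h j (by omega)), h (m + 1) le_rfl]

open Classical in
/-- The embedded point: characteristic function of the union of intervals coded by `f`. -/
noncomputable def emb (k : ℕ → ℕ) (f : ℕ → ℕ) : ℕ → Bool :=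
  fun n => decide (∃ i, k (mseq f i) ≤ n ∧ n < k (mseq f i + 1))

lemma emb_true_iff (k : ℕ → ℕ) (f : ℕ → ℕ) (n : ℕ) :
    emb k f n = true ↔ ∃ i, k (mseq f i) ≤ n ∧ n < k (mseq f i + 1) := by
  simp [emb]

section
variable {k : ℕ → ℕ} (hk : StrictMono k)
include hk

lemma emb_infinite (f : ℕ → ℕ) : {n | emb k f n = true}.Infinite := by
  apply nat_set_infinite
  intro N
  refine ⟨k (mseq f N), ?_, ?_⟩
  · calc N ≤ mseq f N := (mseq_strictMono f).le_apply
    _ ≤ k (mseq f N) := hk.le_apply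
  · rw [Set.mem_setOf_eq, emb_true_iff]
    exact ⟨N, le_rfl, hk (Nat.lt_succ_self _)⟩

/-- The embedding into `InfSets`. -/
noncomputable def embI (f : ℕ → ℕ) : InfSets := ⟨emb k f, emb_infinite hk f⟩

lemma emb_contains_intervals (f : ℕ → ℕ) :
    {n | Set.Ico (k n) (k (n + 1)) ⊆ {i | (embI hk f).1 i = true}}.Infinite := by
  apply nat_set_infinite
  intro N
  refine ⟨mseq f N, ?_, ?_⟩
  · exact (mseq_strictMono f).le_apply
  · intro j hj
    rw [Set.mem_Ico] at hj
    rw [Set.mem_setOf_eq]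
    show emb k f j = true
    rw [emb_true_iff]
    exact ⟨N, hj.1, hj.2⟩

lemma emb_continuous : Continuous (embI hk) := by
  apply Continuous.subtype_mk
  apply continuous_pi
  intro n
  apply IsLocallyConstant.continuous
  rw [IsLocallyConstant.iff_eventually_eq]
  intro f
  have hopen : IsOpen {g : ℕ → ℕ | ∀ j < n + 1, g j = f j} := by
    have : {g : ℕ → ℕ | ∀ j < n + 1, g j = f j} =
        ⋂ j ∈ Finset.range (n + 1), (fun g : ℕ → ℕ => g j) ⁻¹' {f j} := by
      ext g; simp [Set.mem_iInter, Finset.mem_range]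
    rw [this]
    exact isOpen_biInter_finset fun j _ =>
      (isOpen_discrete _).preimage (continuous_apply j)
  filter_upwards [hopen.mem_nhds (fun j _ => rfl)] with g hg
  have key : ∀ h h' : ℕ → ℕ, (∀ j < n + 1, h j = h' j) →
      (∃ i, k (mseq h i) ≤ n ∧ n < k (mseq h i + 1)) →
      (∃ i, k (mseq h' i) ≤ n ∧ n < k (mseq h' i + 1)) := by
    rintro h h' hagree ⟨i, h1, h2⟩
    have hin : i ≤ n := le_trans (le_trans (mseq_strictMono h).le_apply hk.le_apply) h1
    have : mseq h i = mseq h' i := mseq_congr i fun j hj => hagree j (by omega)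
    exact ⟨i, by rw [← this]; exact h1, by rw [← this]; exact h2⟩
  show emb k g n = emb k f n
  rw [emb, emb]
  congr 1
  apply propext
  exact ⟨key g f (fun j hj => hg j hj), key f g (fun j hj => (hg j hj).symm)⟩

end

/-- First true coordinate of `x` at position `≥ t`. -/
def firstTrue (x : InfSets) (t : ℕ) : ℕ :=
  Nat.find (p := fun n => t ≤ n ∧ x.1 n = true)
    (by obtain ⟨n, hn, ht⟩ := x.2.exists_gt t; exact ⟨n, le_of_lt ht, hn⟩)

lemma firstTrue_spec (x : InfSets) (t : ℕ) :
    t ≤ firstTrue x t ∧ x.1 (firstTrue x t) = true :=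
  Nat.find_spec (p := fun n => t ≤ n ∧ x.1 n = true)
    (by obtain ⟨n, hn, ht⟩ := x.2.exists_gt t; exact ⟨n, le_of_lt ht, hn⟩)

lemma firstTrue_min (x : InfSets) (t : ℕ) {j : ℕ} (hj : j < firstTrue x t) :
    ¬ (t ≤ j ∧ x.1 j = true) :=
  Nat.find_min (p := fun n => t ≤ n ∧ x.1 n = true)
    (by obtain ⟨n, hn, ht⟩ := x.2.exists_gt t; exact ⟨n, le_of_lt ht, hn⟩) hj

lemma firstTrue_eq (x : InfSets) (t v : ℕ) (hv : t ≤ v) (hvt : x.1 v = true)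
    (hmin : ∀ j, t ≤ j → x.1 j = true → v ≤ j) : firstTrue x t = v := by
  rcases lt_trichotomy (firstTrue x t) v with h | h | h
  · obtain ⟨h1, h2⟩ := firstTrue_spec x t
    exact absurd (hmin _ h1 h2) (by omega)
  · exact h
  · exact absurd ⟨hv, hvt⟩ (firstTrue_min x t h)

lemma firstTrue_congr {x y : InfSets} (t : ℕ) (h : ∀ j ≤ firstTrue x t, y.1 j = x.1 j) :
    firstTrue y t = firstTrue x t := by
  apply firstTrue_eq
  · exact (firstTrue_spec x t).1
  · rw [h _ le_rfl]; exact (firstTrue_spec x t).2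
  · intro j hj hjt
    by_contra hlt
    push_neg at hlt
    have := firstTrue_min x t hlt
    rw [h j (le_of_lt hlt)] at hjt
    exact this ⟨hj, hjt⟩

/-- The block index of a position. -/
def blk (k : ℕ → ℕ) (hk : StrictMono k) (p : ℕ) : ℕ :=
  Nat.find (p := fun n => p < k (n + 1))
    (⟨p, lt_of_lt_of_le (Nat.lt_succ_self p) hk.le_apply⟩)

lemma blk_k {k : ℕ → ℕ} (hk : StrictMono k) (m : ℕ) : blk k hk (k m) = m := by
  rw [blk, Nat.find_eq_iff]
  refine ⟨hk (Nat.lt_succ_self m), fun j hj => ?_⟩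
  push_neg
  exact hk.le_iff_le.mpr (by omega)

/-- The decoding sequence: starts of the blocks fully contained (for range points). -/
def sseq (k : ℕ → ℕ) (hk : StrictMono k) (x : InfSets) : ℕ → ℕ
  | 0 => firstTrue x 0
  | i + 1 => firstTrue x (k (blk k hk (sseq k hk x i) + 1))

/-- The decoding map. -/
def dec (k : ℕ → ℕ) (hk : StrictMono k) (x : InfSets) : ℕ → ℕ :=
  fun i => match i with
  | 0 => blk k hk (sseq k hk x 0)
  | i + 1 => blk k hk (sseq k hk x (i + 1)) - blk k hk (sseq k hk x i) - 1

lemma sseq_emb {k : ℕ → ℕ} (hk : StrictMono k) (f : ℕ → ℕ) (i : ℕ) :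
    sseq k hk (embI hk f) i = k (mseq f i) := by
  induction i with
  | zero =>
    apply firstTrue_eq
    · exact Nat.zero_le _
    · rw [show ((embI hk f).1 = emb k f) from rfl, emb_true_iff]
      exact ⟨0, le_rfl, hk (Nat.lt_succ_self _)⟩
    · intro j _ hj
      rw [show ((embI hk f).1 = emb k f) from rfl, emb_true_iff] at hj
      obtain ⟨l, h1, _⟩ := hj
      calc k (mseq f 0) ≤ k (mseq f l) := hk.le_iff_le.mpr ((mseq_strictMono f).le_iff_le.mpr (Nat.zero_le l))
      _ ≤ j := h1
  | succ i ih =>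
    rw [sseq, ih, blk_k hk]
    apply firstTrue_eq
    · exact hk.le_iff_le.mpr (mseq_strictMono f (Nat.lt_succ_self i))
    · rw [show ((embI hk f).1 = emb k f) from rfl, emb_true_iff]
      exact ⟨i + 1, le_rfl, hk (Nat.lt_succ_self _)⟩
    · intro j hj hjt
      rw [show ((embI hk f).1 = emb k f) from rfl, emb_true_iff] at hjt
      obtain ⟨l, h1, h2⟩ := hjt
      rcases Nat.lt_or_ge l (i + 1) with hl | hl
      · exfalso
        have : k (mseq f l + 1) ≤ k (mseq f i + 1) :=
          hk.le_iff_le.mpr (by have := (mseq_strictMono f).le_iff_le.mpr (by omega : l ≤ i); omega)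
        omega
      · calc k (mseq f (i + 1)) ≤ k (mseq f l) :=
          hk.le_iff_le.mpr ((mseq_strictMono f).le_iff_le.mpr hl)
        _ ≤ j := h1

lemma dec_leftInverse {k : ℕ → ℕ} (hk : StrictMono k) :
    Function.LeftInverse (dec k hk) (embI hk) := by
  intro f
  funext i
  match i with
  | 0 =>
    show blk k hk (sseq k hk (embI hk f) 0) = f 0
    rw [sseq_emb hk f 0, blk_k hk]
    rfl
  | i + 1 =>
    show blk k hk (sseq k hk (embI hk f) (i + 1)) - blk k hk (sseq k hk (embI hk f) i) - 1 = f (i + 1)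
    rw [sseq_emb hk f (i + 1), sseq_emb hk f i, blk_k hk, blk_k hk]
    show mseq f i + f (i + 1) + 1 - mseq f i - 1 = f (i + 1)
    omega

lemma sseq_congr {k : ℕ → ℕ} (hk : StrictMono k) (i : ℕ) (x : InfSets) :
    ∃ N, ∀ y : InfSets, (∀ j ≤ N, y.1 j = x.1 j) →
      ∀ l ≤ i, sseq k hk y l = sseq k hk x l := by
  induction i with
  | zero =>
    refine ⟨firstTrue x 0, fun y hy l hl => ?_⟩
    interval_cases l
    exact firstTrue_congr 0 hy
  | succ i ih =>
    obtain ⟨N, hN⟩ := ih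
    refine ⟨max N (sseq k hk x (i + 1)), fun y hy l hl => ?_⟩
    have hyN : ∀ j ≤ N, y.1 j = x.1 j := fun j hj => hy j (le_trans hj (le_max_left _ _))
    rcases Nat.lt_or_ge l (i + 1) with h | h
    · exact hN y hyN l (by omega)
    · have hli : l = i + 1 := by omega
      subst hli
      show firstTrue y (k (blk k hk (sseq k hk y i) + 1)) = _
      rw [hN y hyN i le_rfl]
      exact firstTrue_congr _ fun j hj => hy j (le_trans hj (le_max_right _ _))

lemma sseq_locallyConstant {k : ℕ → ℕ} (hk : StrictMono k) (i : ℕ) :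
    IsLocallyConstant (fun x : InfSets => sseq k hk x i) := by
  rw [IsLocallyConstant.iff_eventually_eq]
  intro x
  obtain ⟨N, hN⟩ := sseq_congr hk i x
  have := (cyl_isOpen x.1 (N + 1)).mem_nhds (x := x) (fun j _ => rfl)
  filter_upwards [this] with y hy
  exact hN y (fun j hj => hy j (by omega)) i le_rfl

lemma dec_continuous {k : ℕ → ℕ} (hk : StrictMono k) : Continuous (dec k hk) := by
  apply continuous_pi
  intro i
  match i with
  | 0 =>
    exact ((sseq_locallyConstant hk 0).comp (blk k hk)).continuous
  | i + 1 =>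
    exact (IsLocallyConstant.comp₂ (sseq_locallyConstant hk (i + 1))
      (sseq_locallyConstant hk i)
      (fun a b => blk k hk a - blk k hk b - 1)).continuous

theorem embI_isClosedEmbedding {k : ℕ → ℕ} (hk : StrictMono k) :
    Topology.IsClosedEmbedding (embI hk) :=
  Function.LeftInverse.isClosedEmbedding (dec_leftInverse hk)
    (dec_continuous hk) (emb_continuous hk)

/-- Every comeager semifilter fails to be Menger: it contains a closed copy
of the Baire space. -/
theorem stmt8 (F : Set (Set ℕ)) (hF : IsSemifilter F)
    (S : Set InfSets) (hS : S = {f : InfSets | {n : ℕ | f.1 n = true} ∈ F})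
    (hcomeager : IsMeagre Sᶜ) :
    ¬ Menger ↥S ∧ ∃ e : (ℕ → ℕ) → InfSets,
      Topology.IsClosedEmbedding e ∧ Set.range e ⊆ S := by
  obtain ⟨k, hk0, hkmono, hkF⟩ := exists_intervals F hF S hS hcomeager
  have hrange : Set.range (embI hkmono) ⊆ S := by
    rintro _ ⟨f, rfl⟩
    rw [hS]
    exact hkF _ (emb_contains_intervals hkmono f)
  refine ⟨?_, embI hkmono, embI_isClosedEmbedding hkmono, hrange⟩
  intro hM
  apply baire_not_menger
  have hcl := embI_isClosedEmbedding hkmono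
  have hmem : ∀ f : ℕ → ℕ, embI hkmono f ∈ S := fun f => hrange ⟨f, rfl⟩
  set e' : (ℕ → ℕ) → ↥S := Set.codRestrict (embI hkmono) S hmem with he'def
  have he' : Topology.IsClosedEmbedding e' := by
    constructor
    · exact hcl.isEmbedding.codRestrict S hmem
    · have : Set.range e' = Subtype.val ⁻¹' Set.range (embI hkmono) := by
        ext x
        constructor
        · rintro ⟨f, rfl⟩
          exact ⟨f, rfl⟩
        · rintro ⟨f, hf⟩
          exact ⟨f, Subtype.ext hf⟩
      rw [this]
      exact hcl.isClosed_range.preimage continuous_subtype_val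
  exact menger_of_isClosedEmbedding he' hM
end
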